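/- Define the 3n×3n unitary block matrices R = [[0,0,S_n^{-1}],[S_n,0,0],[0,1_n,0]] and T = [[0,0,1_n],[Ω_n,0,0],[0,Ω_n^{-1},0]]. Then R³ = T³ = 1_{3n} and (RT)³ = ω̄_n · 1_{3n}. -/
import Mathlib


open Complex Matrix

/-- `ω_n = exp(2πi/n)`. -/
noncomputable def omg (n : ℕ) : ℂ := Complex.exp (2 * Real.pi * Complex.I / n)

/-- The `n×n` cyclic shift matrix `S_n`, with `S_n e_k = e_{k+1}` (indices mod `n`). -/
def Vshift (n : ℕ) : Matrix (Fin n) (Fin n) ℂ :=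
  Matrix.of fun i j => if (i : ℕ) = ((j : ℕ) + 1) % n then 1 else 0

/-- The diagonal matrix `Ω_n = diag(ω_n, ω_n^2, …, ω_n^n)`. -/
noncomputable def VOmega (n : ℕ) : Matrix (Fin n) (Fin n) ℂ :=
  Matrix.diagonal fun k => omg n ^ ((k : ℕ) + 1)

/-- Assemble a `3×3` array of `n×n` blocks into a `3n×3n` matrix. -/
def blk3 {n : ℕ} (f : Fin 3 → Fin 3 → Matrix (Fin n) (Fin n) ℂ) :
    Matrix (Fin 3 × Fin n) (Fin 3 × Fin n) ℂ :=
  Matrix.of fun p q => f p.1 q.1 p.2 q.2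

/-- `R = [[0,0,S_n⁻¹],[S_n,0,0],[0,1,0]]`. -/
noncomputable def Rp3 (n : ℕ) : Matrix (Fin 3 × Fin n) (Fin 3 × Fin n) ℂ :=
  blk3 ![![0, 0, (Vshift n)⁻¹], ![Vshift n, 0, 0], ![0, 1, 0]]

/-- `T = [[0,0,1],[Ω_n,0,0],[0,Ω_n⁻¹,0]]`. -/
noncomputable def Tp3 (n : ℕ) : Matrix (Fin 3 × Fin n) (Fin 3 × Fin n) ℂ :=
  blk3 ![![0, 0, 1], ![VOmega n, 0, 0], ![0, (VOmega n)⁻¹, 0]]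

/-! ### Auxiliary lemmas -/

lemma omg_ne_zero (n : ℕ) : omg n ≠ 0 := Complex.exp_ne_zero _

lemma conj_omg (n : ℕ) : (starRingEnd ℂ) (omg n) = (omg n)⁻¹ := by
  rw [omg, ← Complex.exp_conj, ← Complex.exp_neg]
  congr 1
  simp [map_div₀, Complex.conj_I, map_ofNat]
  ring

lemma omg_pow_n {n : ℕ} [NeZero n] : omg n ^ n = 1 := by
  have h : (n:ℂ) ≠ 0 := Nat.cast_ne_zero.mpr (NeZero.ne n)
  rw [omg, ← Complex.exp_nat_mul, mul_div_assoc', mul_comm, mul_div_assoc,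
    div_self h, mul_one]
  exact Complex.exp_two_pi_mul_I

lemma omg_pow_mod {n : ℕ} [NeZero n] (a : ℕ) : omg n ^ (a % n) = omg n ^ a := by
  conv_rhs => rw [← Nat.div_add_mod a n]
  rw [pow_add, pow_mul, omg_pow_n, one_pow, one_mul]

section Blocks

variable {n : ℕ} [NeZero n]

lemma shift_apply (i j : Fin n) : Vshift n i j = if i = j + 1 then 1 else 0 := by
  have h : ((j + 1 : Fin n) : ℕ) = ((j:ℕ)+1) % n := by
    simp [Fin.add_def, Fin.val_one', Nat.add_mod_mod]
  simp [Vshift, Fin.ext_iff, h]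

lemma shift_apply' (i j : Fin n) : Vshift n i j = if j = i - 1 then 1 else 0 := by
  rw [shift_apply]
  congr 1
  apply propext
  rw [eq_sub_iff_add_eq, eq_comm]

lemma shift_mul_conjT : Vshift n * (Vshift n)ᴴ = 1 := by
  ext i j
  simp only [Matrix.mul_apply, Matrix.conjTranspose_apply, shift_apply' (n := n),
    Matrix.one_apply, apply_ite (starRingEnd ℂ), _root_.map_one, map_zero, ite_mul, one_mul,
    zero_mul, mul_ite, mul_one, mul_zero]
  rw [Finset.sum_eq_single (i - 1)] <;> aesop

lemma conjT_mul_shift : (Vshift n)ᴴ * Vshift n = 1 := by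
  ext i j
  simp only [Matrix.mul_apply, Matrix.conjTranspose_apply, shift_apply (n := n),
    Matrix.one_apply, apply_ite (starRingEnd ℂ), _root_.map_one, map_zero, ite_mul, one_mul,
    zero_mul, mul_ite, mul_one, mul_zero]
  rw [Finset.sum_eq_single (i + 1)] <;> aesop

lemma shift_inv : (Vshift n)⁻¹ = (Vshift n)ᴴ :=
  Matrix.inv_eq_right_inv shift_mul_conjT

lemma omega_conjT : (VOmega n)ᴴ = Matrix.diagonal fun k : Fin n => (omg n ^ ((k:ℕ)+1))⁻¹ := by
  ext i j
  by_cases h : i = j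
  · simp [VOmega, Matrix.conjTranspose_apply, Matrix.diagonal_apply, h, map_pow, conj_omg,
      inv_pow]
  · simp only [VOmega, Matrix.conjTranspose_apply, Matrix.diagonal_apply_ne _ (fun h' => h h'.symm),
      Matrix.diagonal_apply_ne _ h, map_zero, star_zero]

lemma omega_mul_conjT : VOmega n * (VOmega n)ᴴ = 1 := by
  rw [omega_conjT, VOmega, Matrix.diagonal_mul_diagonal]
  convert Matrix.diagonal_one
  exact mul_inv_cancel₀ (pow_ne_zero _ (omg_ne_zero n))

lemma conjT_mul_omega : (VOmega n)ᴴ * VOmega n = 1 := by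
  rw [omega_conjT, VOmega, Matrix.diagonal_mul_diagonal]
  convert Matrix.diagonal_one
  exact inv_mul_cancel₀ (pow_ne_zero _ (omg_ne_zero n))

lemma omega_inv : (VOmega n)⁻¹ = (VOmega n)ᴴ :=
  Matrix.inv_eq_right_inv omega_mul_conjT

lemma omega_shift_comm : VOmega n * Vshift n = omg n • (Vshift n * VOmega n) := by
  ext i j
  rw [VOmega, Matrix.smul_apply, Matrix.diagonal_mul, Matrix.mul_diagonal, shift_apply]
  split
  · next h =>
    subst h
    have : ((j + 1 : Fin n) : ℕ) = ((j:ℕ)+1) % n := by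
      simp [Fin.add_def, Fin.val_one', Nat.add_mod_mod]
    rw [this, pow_succ, omg_pow_mod, smul_eq_mul]
    ring
  · simp

lemma shiftT_apply (i j : Fin n) : (Vshift n)ᴴ i j = if j = i + 1 then 1 else 0 := by
  rw [Matrix.conjTranspose_apply, shift_apply]
  split <;> simp

lemma shift_omegaT_comm :
    Vshift n * (VOmega n)ᴴ = omg n • ((VOmega n)ᴴ * Vshift n) := by
  ext i j
  rw [omega_conjT, Matrix.smul_apply, Matrix.mul_diagonal, Matrix.diagonal_mul, shift_apply]
  split
  · next h =>
    subst h
    have hv : ((j + 1 : Fin n) : ℕ) = ((j:ℕ)+1) % n := by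
      simp [Fin.add_def, Fin.val_one', Nat.add_mod_mod]
    rw [hv, pow_succ (omg n) (((j:ℕ)+1) % n), omg_pow_mod, smul_eq_mul]
    field_simp [omg_ne_zero n]
    try ring
  · simp

lemma omega_shiftT_comm :
    VOmega n * (Vshift n)ᴴ = (omg n)⁻¹ • ((Vshift n)ᴴ * VOmega n) := by
  ext i j
  rw [VOmega, Matrix.smul_apply, Matrix.diagonal_mul, Matrix.mul_diagonal, shiftT_apply]
  split
  · next h =>
    subst h
    have hv : ((i + 1 : Fin n) : ℕ) = ((i:ℕ)+1) % n := by
      simp [Fin.add_def, Fin.val_one', Nat.add_mod_mod]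
    rw [hv, pow_succ (omg n) (((i:ℕ)+1) % n), omg_pow_mod, smul_eq_mul]
    field_simp [omg_ne_zero n]
    try ring
  · simp

lemma shiftT_omegaT_comm :
    (Vshift n)ᴴ * (VOmega n)ᴴ = (omg n)⁻¹ • ((VOmega n)ᴴ * (Vshift n)ᴴ) := by
  ext i j
  rw [omega_conjT, Matrix.smul_apply, Matrix.mul_diagonal, Matrix.diagonal_mul, shiftT_apply]
  split
  · next h =>
    subst h
    have hv : ((i + 1 : Fin n) : ℕ) = ((i:ℕ)+1) % n := by
      simp [Fin.add_def, Fin.val_one', Nat.add_mod_mod]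
    rw [hv, pow_succ (omg n) (((i:ℕ)+1) % n), omg_pow_mod, smul_eq_mul]
    field_simp [omg_ne_zero n]
    try ring
  · simp

lemma blk3_mul (f g : Fin 3 → Fin 3 → Matrix (Fin n) (Fin n) ℂ) :
    blk3 f * blk3 g = blk3 fun i j => ∑ k, f i k * g k j := by
  ext ⟨i, a⟩ ⟨j, b⟩
  simp only [blk3, Matrix.of_apply, Matrix.mul_apply, Fintype.sum_prod_type,
    Matrix.sum_apply]

lemma blk3_conjT (f : Fin 3 → Fin 3 → Matrix (Fin n) (Fin n) ℂ) :
    (blk3 f)ᴴ = blk3 fun i j => (f j i)ᴴ := by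
  ext ⟨i, a⟩ ⟨j, b⟩
  simp [blk3, Matrix.conjTranspose_apply]

lemma blk3_one :
    (1 : Matrix (Fin 3 × Fin n) (Fin 3 × Fin n) ℂ) =
      blk3 fun i j => if i = j then 1 else 0 := by
  ext ⟨i, a⟩ ⟨j, b⟩
  by_cases h : i = j <;>
    simp [blk3, Matrix.one_apply, Prod.ext_iff, h]

lemma blk3_smul (c : ℂ) (f : Fin 3 → Fin 3 → Matrix (Fin n) (Fin n) ℂ) :
    c • blk3 f = blk3 fun i j => c • f i j := rfl

end Blocks

/-- The `3n×3n` block matrices `R, T` are unitary, `R³ = T³ = 1`,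
and `(RT)³ = ω̄_n • 1`. -/
theorem stmt11 (n : ℕ) (hn : 1 ≤ n) :
    Rp3 n ∈ Matrix.unitaryGroup (Fin 3 × Fin n) ℂ ∧
    Tp3 n ∈ Matrix.unitaryGroup (Fin 3 × Fin n) ℂ ∧
    Rp3 n ^ 3 = 1 ∧ Tp3 n ^ 3 = 1 ∧
    (Rp3 n * Tp3 n) ^ 3 =
      (starRingEnd ℂ) (omg n) • (1 : Matrix (Fin 3 × Fin n) (Fin 3 × Fin n) ℂ) := by
  have : NeZero n := ⟨by omega⟩
  have hS1 : Vshift n * (Vshift n)ᴴ = 1 := shift_mul_conjT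
  have hS2 : (Vshift n)ᴴ * Vshift n = 1 := conjT_mul_shift
  have hSi : (Vshift n)⁻¹ = (Vshift n)ᴴ := shift_inv
  have hO1 : VOmega n * (VOmega n)ᴴ = 1 := omega_mul_conjT
  have hO2 : (VOmega n)ᴴ * VOmega n = 1 := conjT_mul_omega
  have hOi : (VOmega n)⁻¹ = (VOmega n)ᴴ := omega_inv
  have comm : VOmega n * Vshift n = omg n • (Vshift n * VOmega n) := omega_shift_comm
  refine ⟨?_, ?_, ?_, ?_, ?_⟩
  · rw [Matrix.mem_unitaryGroup_iff, Matrix.star_eq_conjTranspose, Rp3, blk3_conjT, blk3_mul,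
      blk3_one]
    refine congrArg blk3 (funext fun i => funext fun j => ?_)
    fin_cases i <;> fin_cases j <;>
      simp [Fin.sum_univ_three, hSi, hS1, hS2, Matrix.vecHead, Matrix.vecTail]
  · rw [Matrix.mem_unitaryGroup_iff, Matrix.star_eq_conjTranspose, Tp3, blk3_conjT, blk3_mul,
      blk3_one]
    refine congrArg blk3 (funext fun i => funext fun j => ?_)
    fin_cases i <;> fin_cases j <;>
      simp [Fin.sum_univ_three, hOi, hO1, hO2, Matrix.vecHead, Matrix.vecTail]
  · rw [pow_succ, pow_succ, pow_one, Rp3, blk3_mul, blk3_mul, blk3_one]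
    refine congrArg blk3 (funext fun i => funext fun j => ?_)
    fin_cases i <;> fin_cases j <;>
      simp [Fin.sum_univ_three, hSi, hS1, hS2, Matrix.vecHead, Matrix.vecTail]
  · rw [pow_succ, pow_succ, pow_one, Tp3, blk3_mul, blk3_mul, blk3_one]
    refine congrArg blk3 (funext fun i => funext fun j => ?_)
    fin_cases i <;> fin_cases j <;>
      simp [Fin.sum_univ_three, hOi, hO1, hO2, Matrix.vecHead, Matrix.vecTail]
  · have hOTS : (VOmega n)ᴴ * Vshift n = (omg n)⁻¹ • (Vshift n * (VOmega n)ᴴ) := by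
      rw [shift_omegaT_comm, smul_smul, inv_mul_cancel₀ (omg_ne_zero n), one_smul]
    have hA : (Vshift n)ᴴ * (VOmega n)ᴴ * Vshift n * VOmega n = (omg n)⁻¹ • 1 := by
      rw [mul_assoc ((Vshift n)ᴴ) ((VOmega n)ᴴ) (Vshift n), hOTS]
      simp only [mul_smul_comm, smul_mul_assoc, ← mul_assoc, hS2, one_mul, hO2]
    have hB : Vshift n * VOmega n * ((Vshift n)ᴴ * (VOmega n)ᴴ) = (omg n)⁻¹ • 1 := by
      rw [← mul_assoc (Vshift n * VOmega n) ((Vshift n)ᴴ) ((VOmega n)ᴴ),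
        mul_assoc (Vshift n) (VOmega n) ((Vshift n)ᴴ), omega_shiftT_comm]
      simp only [mul_smul_comm, smul_mul_assoc, ← mul_assoc, hS1, one_mul, hO1]
    have hC : VOmega n * ((Vshift n)ᴴ * (VOmega n)ᴴ) * Vshift n = (omg n)⁻¹ • 1 := by
      rw [shiftT_omegaT_comm]
      simp only [mul_smul_comm, smul_mul_assoc, ← mul_assoc, hO1, one_mul, hS2]
    rw [pow_succ, pow_succ, pow_one, Rp3, Tp3, blk3_mul, blk3_mul, blk3_mul, conj_omg,
      blk3_one, blk3_smul]
    refine congrArg blk3 (funext fun i => funext fun j => ?_)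
    fin_cases i <;> fin_cases j <;>
      simp [Fin.sum_univ_three, hSi, hOi, hA, hB, hC, Matrix.vecHead, Matrix.vecTail]
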